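/- The 2-D vorticity transport bound: let Ω ⊂ ℝ² be a bounded simply connected domain, and suppose the solution v of the 2-D Euler equations with f = 0 and divergence-free, tangential initial data v₀ has vorticity ζ(t,x) = ζ₀(U(0,t,x)), where U(0,t,·) : Ω̄ → Ω̄ is a surjective measure-preserving map satisfying |U(0,t,x) − U(0,t,y)| ≤ K|x−y|^δ with δ = e^{−c₁Bt}, B = ‖ζ₀‖_∞. If ζ₀ has finite pointwise Dini seminorm ⟨ζ₀⟩_* = sup_x ∫₀^ρ ω_{ζ₀}(x;r)/r dr < ∞, then for all t ∈ [0,T], ⟨ζ(t)⟩_* ≤ (1/δ)·⟨ζ₀⟩_{*,Kρ^δ} and ‖ζ(t)‖_∞ = ‖ζ₀‖_∞; hence ‖|ζ(t)‖|_* ≤ C_T·‖|ζ₀‖|_* for a constant C_T depending on T, K, c₁, B, ρ. -/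

import Mathlib

/-!
Since `U` is `δ`-Hölder with constant `K`, a point `y` with `|x - y| ≤ r` is sent within
`K r^δ` of `U x`, so `ω_{ζ₀ ∘ U}(x; r) ≤ ω_{ζ₀}(U x; K r^δ)`. The substitution `u = K r^δ`
turns `dr / r` into `du / (δ u)`, which gives `⟨ζ₀ ∘ U⟩_{*,ρ} ≤ δ⁻¹ ⟨ζ₀⟩_{*,K ρ^δ}`.
Surjectivity of `U` makes the sup norm invariant. For the full norm, `K ρ^δ ≤ K max(ρ, 1)`,
and enlarging the radius from `ρ` to `σ` costs at most `2 log(σ/ρ) ‖ζ₀‖_∞`, because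
`ω ≤ 2 ‖ζ₀‖_∞`; finally `δ⁻¹ ≤ e^{c₁ B T}`.
-/

open MeasureTheory Set
open scoped ENNReal

noncomputable section

/-- Pointwise modulus of continuity `ω_g(x; r)` relative to a set `s ⊆ ℝ²`. -/
def modulusPtOn (s : Set (EuclideanSpace ℝ (Fin 2)))
    (g : EuclideanSpace ℝ (Fin 2) → ℝ) (x : EuclideanSpace ℝ (Fin 2)) (r : ℝ) : ℝ :=
  sSup {d | ∃ y ∈ s, dist x y ≤ r ∧ d = |g x - g y|}

/-- Pointwise Dini seminorm `⟨g⟩_{*,σ} = sup_x ∫₀^σ ω_g(x;r)/r dr`. -/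
def diniSeminormPt (s : Set (EuclideanSpace ℝ (Fin 2)))
    (g : EuclideanSpace ℝ (Fin 2) → ℝ) (σ : ℝ) : ℝ≥0∞ :=
  ⨆ x : s, ∫⁻ r in Ioc (0 : ℝ) σ, ENNReal.ofReal (modulusPtOn s g x r / r)

/-- Sup norm on `s`. -/
def supNormOn (s : Set (EuclideanSpace ℝ (Fin 2)))
    (g : EuclideanSpace ℝ (Fin 2) → ℝ) : ℝ :=
  sSup {d | ∃ x ∈ s, d = |g x|}

lemma Real.rpow_le_max_one {ρ δ : ℝ} (hρ : 0 ≤ ρ) (hδ₀ : 0 ≤ δ) (hδ₁ : δ ≤ 1) :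
    ρ ^ δ ≤ max ρ 1 := by
  rcases le_total ρ 1 with h | h
  · exact (Real.rpow_le_one hρ h hδ₀).trans (le_max_right _ _)
  · calc ρ ^ δ ≤ ρ ^ (1 : ℝ) := Real.rpow_le_rpow_of_exponent_le h hδ₁
      _ = ρ := Real.rpow_one ρ
      _ ≤ max ρ 1 := le_max_left _ _

/-- The substitution `u = K r^δ`, under which `du / u = δ dr / r`. -/
lemma lintegral_Ioc_comp_mul_rpow_div_le (φ : ℝ → ℝ) {K δ ρ : ℝ} (hK : 0 < K) (hδ : 0 < δ) :
    ∫⁻ r in Ioc 0 ρ, ENNReal.ofReal (φ (K * r ^ δ) / r) ≤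
      ENNReal.ofReal (1 / δ) * ∫⁻ u in Ioc 0 (K * ρ ^ δ), ENNReal.ofReal (φ u / u) := by
  set f : ℝ → ℝ := fun r => K * r ^ δ
  set f' : ℝ → ℝ := fun r => K * (δ * r ^ (δ - 1))
  have hf' : ∀ r ∈ Ioc (0 : ℝ) ρ, HasDerivWithinAt f (f' r) (Ioc 0 ρ) r := fun r hr =>
    ((Real.hasDerivAt_rpow_const (Or.inl hr.1.ne')).const_mul K).hasDerivWithinAt
  have hf_mono : StrictMonoOn f (Ioc 0 ρ) := fun a ha b _ hab =>
    mul_lt_mul_of_pos_left (Real.rpow_lt_rpow ha.1.le hab hδ) hK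
  have hf_image : f '' Ioc 0 ρ ⊆ Ioc 0 (K * ρ ^ δ) := by
    rintro _ ⟨r, hr, rfl⟩
    exact ⟨mul_pos hK (Real.rpow_pos_of_pos hr.1 δ),
      mul_le_mul_of_nonneg_left (Real.rpow_le_rpow hr.1.le hr.2 hδ.le) hK.le⟩
  have hjacobian : ∀ r ∈ Ioc (0 : ℝ) ρ, ENNReal.ofReal (φ (f r) / r) =
      ENNReal.ofReal (1 / δ) * (ENNReal.ofReal |f' r| * ENNReal.ofReal (φ (f r) / f r)) := by
    intro r hr
    have hf'_pos : 0 < f' r := mul_pos hK (mul_pos hδ (Real.rpow_pos_of_pos hr.1 _))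
    have hfr : f r = K * (r ^ (δ - 1) * r) := by
      rw [← Real.rpow_add_one hr.1.ne', sub_add_cancel]
    rw [abs_of_pos hf'_pos, ← ENNReal.ofReal_mul hf'_pos.le,
      ← ENNReal.ofReal_mul (by positivity), hfr]
    congr 1
    have hpow : 0 < r ^ (δ - 1) := Real.rpow_pos_of_pos hr.1 _
    simp only [f']
    field_simp
  calc ∫⁻ r in Ioc 0 ρ, ENNReal.ofReal (φ (f r) / r)
      = ENNReal.ofReal (1 / δ) *
          ∫⁻ r in Ioc 0 ρ, ENNReal.ofReal |f' r| * ENNReal.ofReal (φ (f r) / f r) := by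
        rw [setLIntegral_congr_fun measurableSet_Ioc hjacobian,
          lintegral_const_mul' _ _ ENNReal.ofReal_ne_top]
    _ = ENNReal.ofReal (1 / δ) * ∫⁻ u in f '' Ioc 0 ρ, ENNReal.ofReal (φ u / u) := by
        rw [lintegral_image_eq_lintegral_abs_det_fderiv_mul volume measurableSet_Ioc
          (fun r hr => (hf' r hr).hasFDerivWithinAt) hf_mono.injOn]
        simp only [ContinuousLinearMap.det_toSpanSingleton]
    _ ≤ _ := mul_le_mul_right (lintegral_mono_set hf_image) _

lemma lintegral_Ioc_ofReal_inv {ρ σ : ℝ} (hρ : 0 < ρ) (hρσ : ρ ≤ σ) :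
    ∫⁻ r in Ioc ρ σ, ENNReal.ofReal r⁻¹ = ENNReal.ofReal (Real.log (σ / ρ)) := by
  have hint : IntegrableOn (fun r : ℝ => r⁻¹) (Ioc ρ σ) := by
    refine (intervalIntegrable_iff_integrableOn_Ioc_of_le hρσ).1
      (ContinuousOn.intervalIntegrable fun r hr => (continuousAt_inv₀ ?_).continuousWithinAt)
    rw [uIcc_of_le hρσ] at hr
    exact (hρ.trans_le hr.1).ne'
  rw [← ofReal_integral_eq_lintegral_ofReal hint, ← intervalIntegral.integral_of_le hρσ,
    integral_inv_of_pos hρ (hρ.trans_le hρσ)]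
  filter_upwards [ae_restrict_mem measurableSet_Ioc] with r hr
  exact inv_nonneg.2 (hρ.trans hr.1).le

lemma add_le_ofReal_mul_add_of_le {a D N : ℝ≥0∞} {E c : ℝ} (hE : 0 ≤ E) (hc : 0 ≤ c)
    (h : a ≤ ENNReal.ofReal E * (D + ENNReal.ofReal c * N)) :
    a + N ≤ ENNReal.ofReal (E * (1 + c) + 1) * (D + N) := by
  rw [ENNReal.ofReal_add (by positivity) zero_le_one, ENNReal.ofReal_mul hE,
    ENNReal.ofReal_add zero_le_one hc, ENNReal.ofReal_one]
  calc a + N ≤ ENNReal.ofReal E * (D + ENNReal.ofReal c * N) + N := by gcongr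
    _ ≤ ENNReal.ofReal E * ((D + N) + ENNReal.ofReal c * (D + N)) + (D + N) := by
        gcongr
        · exact le_self_add
        · exact le_add_self
        · exact le_add_self
    _ = (ENNReal.ofReal E * (1 + ENNReal.ofReal c) + 1) * (D + N) := by ring

section

variable {s : Set (EuclideanSpace ℝ (Fin 2))} {g : EuclideanSpace ℝ (Fin 2) → ℝ} {M : ℝ}
  {x : EuclideanSpace ℝ (Fin 2)} {r : ℝ}

lemma supNormOn_nonneg : 0 ≤ supNormOn s g :=
  Real.sSup_nonneg (by rintro _ ⟨x, -, rfl⟩; exact abs_nonneg _)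

lemma IsCompact.abs_le_supNormOn (hs : IsCompact s) (hg : ContinuousOn g s) :
    ∀ x ∈ s, |g x| ≤ supNormOn s g := by
  intro x hx
  have hset : {d | ∃ x ∈ s, d = |g x|} = (fun x => |g x|) '' s := by
    ext d; simp [eq_comm]
  rw [supNormOn, hset]
  exact le_csSup (hs.image_of_continuousOn hg.abs).bddAbove (mem_image_of_mem _ hx)

lemma supNormOn_comp_eq {U : EuclideanSpace ℝ (Fin 2) → EuclideanSpace ℝ (Fin 2)}
    (hU : MapsTo U s s) (hU_surj : SurjOn U s s) : supNormOn s (g ∘ U) = supNormOn s g := by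
  unfold supNormOn
  congr 1
  ext d
  constructor
  · rintro ⟨x, hx, rfl⟩
    exact ⟨U x, hU hx, rfl⟩
  · rintro ⟨y, hy, rfl⟩
    obtain ⟨x, hx, rfl⟩ := hU_surj hy
    exact ⟨x, hx, rfl⟩

lemma abs_sub_le_two_mul_of_forall_abs_le (hM : ∀ z ∈ s, |g z| ≤ M) {y : EuclideanSpace ℝ (Fin 2)}
    (hx : x ∈ s) (hy : y ∈ s) : |g x - g y| ≤ 2 * M := by
  linarith [abs_sub (g x) (g y), hM x hx, hM y hy]

lemma bddAbove_modulusPtOn_set (hM : ∀ z ∈ s, |g z| ≤ M) (hx : x ∈ s) (r : ℝ) :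
    BddAbove {d | ∃ y ∈ s, dist x y ≤ r ∧ d = |g x - g y|} := by
  refine ⟨2 * M, ?_⟩
  rintro d ⟨y, hy, -, rfl⟩
  exact abs_sub_le_two_mul_of_forall_abs_le hM hx hy

lemma modulusPtOn_nonneg (hM : ∀ z ∈ s, |g z| ≤ M) (hx : x ∈ s) (hr : 0 ≤ r) :
    0 ≤ modulusPtOn s g x r :=
  le_csSup (bddAbove_modulusPtOn_set hM hx r) ⟨x, hx, by simpa using hr, by simp⟩

lemma modulusPtOn_le_two_mul (hM : ∀ z ∈ s, |g z| ≤ M) (hx : x ∈ s) (r : ℝ) :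
    modulusPtOn s g x r ≤ 2 * M := by
  refine Real.sSup_le ?_ (by linarith [abs_nonneg (g x), hM x hx])
  rintro d ⟨y, hy, -, rfl⟩
  exact abs_sub_le_two_mul_of_forall_abs_le hM hx hy

lemma modulusPtOn_comp_le {U : EuclideanSpace ℝ (Fin 2) → EuclideanSpace ℝ (Fin 2)} {K δ : ℝ}
    (hK : 0 ≤ K) (hδ : 0 ≤ δ) (hM : ∀ z ∈ s, |g z| ≤ M) (hU : MapsTo U s s)
    (hU_holder : ∀ x ∈ s, ∀ y ∈ s, dist (U x) (U y) ≤ K * dist x y ^ δ)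
    (hx : x ∈ s) (hr : 0 ≤ r) :
    modulusPtOn s (g ∘ U) x r ≤ modulusPtOn s g (U x) (K * r ^ δ) := by
  refine Real.sSup_le ?_ (modulusPtOn_nonneg hM (hU hx) (by positivity))
  rintro d ⟨y, hy, hxy, rfl⟩
  refine le_csSup (bddAbove_modulusPtOn_set hM (hU hx) _) ⟨U y, hU hy, ?_, rfl⟩
  calc dist (U x) (U y) ≤ K * dist x y ^ δ := hU_holder x hx y hy
    _ ≤ K * r ^ δ := by gcongr

lemma diniSeminormPt_mono {σ₁ σ₂ : ℝ} (h : σ₁ ≤ σ₂) :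
    diniSeminormPt s g σ₁ ≤ diniSeminormPt s g σ₂ :=
  iSup_mono fun _ => lintegral_mono_set (Ioc_subset_Ioc_right h)

lemma diniSeminormPt_le_add_log (hM : ∀ z ∈ s, |g z| ≤ M) {ρ σ : ℝ} (hρ : 0 < ρ)
    (hρσ : ρ ≤ σ) :
    diniSeminormPt s g σ ≤
      diniSeminormPt s g ρ + ENNReal.ofReal (2 * Real.log (σ / ρ)) * ENNReal.ofReal M := by
  refine iSup_le fun ⟨x, hx⟩ => ?_
  have hM₀ : 0 ≤ M := (abs_nonneg _).trans (hM x hx)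
  have htail : ∫⁻ r in Ioc ρ σ, ENNReal.ofReal (modulusPtOn s g x r / r) ≤
      ENNReal.ofReal (2 * Real.log (σ / ρ)) * ENNReal.ofReal M := by
    calc ∫⁻ r in Ioc ρ σ, ENNReal.ofReal (modulusPtOn s g x r / r)
        ≤ ∫⁻ r in Ioc ρ σ, ENNReal.ofReal (2 * M) * ENNReal.ofReal r⁻¹ := by
          refine setLIntegral_mono' measurableSet_Ioc fun r hr => ?_
          rw [← ENNReal.ofReal_mul (by positivity), ← div_eq_mul_inv]
          exact ENNReal.ofReal_le_ofReal (div_le_div_of_nonneg_right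
            (modulusPtOn_le_two_mul hM hx r) (hρ.trans hr.1).le)
      _ = ENNReal.ofReal (2 * Real.log (σ / ρ)) * ENNReal.ofReal M := by
          have hlog : 0 ≤ Real.log (σ / ρ) := Real.log_nonneg ((one_le_div hρ).2 hρσ)
          rw [lintegral_const_mul' _ _ ENNReal.ofReal_ne_top, lintegral_Ioc_ofReal_inv hρ hρσ,
            ← ENNReal.ofReal_mul (by positivity), ← ENNReal.ofReal_mul (by positivity)]
          ring_nf
  calc ∫⁻ r in Ioc 0 σ, ENNReal.ofReal (modulusPtOn s g x r / r)
      = (∫⁻ r in Ioc 0 ρ, ENNReal.ofReal (modulusPtOn s g x r / r)) +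
          ∫⁻ r in Ioc ρ σ, ENNReal.ofReal (modulusPtOn s g x r / r) := by
        rw [← Ioc_union_Ioc_eq_Ioc hρ.le hρσ,
          lintegral_union measurableSet_Ioc (Ioc_disjoint_Ioc_of_le le_rfl)]
    _ ≤ _ := add_le_add (le_iSup (fun y : s =>
          ∫⁻ r in Ioc 0 ρ, ENNReal.ofReal (modulusPtOn s g y r / r)) ⟨x, hx⟩) htail

lemma diniSeminormPt_comp_le {U : EuclideanSpace ℝ (Fin 2) → EuclideanSpace ℝ (Fin 2)}
    {K δ : ℝ} (hK : 0 < K) (hδ : 0 < δ) (hM : ∀ z ∈ s, |g z| ≤ M) (hU : MapsTo U s s)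
    (hU_holder : ∀ x ∈ s, ∀ y ∈ s, dist (U x) (U y) ≤ K * dist x y ^ δ) (ρ : ℝ) :
    diniSeminormPt s (g ∘ U) ρ ≤ ENNReal.ofReal (1 / δ) * diniSeminormPt s g (K * ρ ^ δ) := by
  refine iSup_le fun ⟨x, hx⟩ => ?_
  calc ∫⁻ r in Ioc 0 ρ, ENNReal.ofReal (modulusPtOn s (g ∘ U) x r / r)
      ≤ ∫⁻ r in Ioc 0 ρ, ENNReal.ofReal (modulusPtOn s g (U x) (K * r ^ δ) / r) := by
        refine setLIntegral_mono' measurableSet_Ioc fun r hr => ENNReal.ofReal_le_ofReal ?_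
        exact div_le_div_of_nonneg_right
          (modulusPtOn_comp_le hK.le hδ.le hM hU hU_holder hx hr.1.le) hr.1.le
    _ ≤ ENNReal.ofReal (1 / δ) *
          ∫⁻ u in Ioc 0 (K * ρ ^ δ), ENNReal.ofReal (modulusPtOn s g (U x) u / u) :=
        lintegral_Ioc_comp_mul_rpow_div_le _ hK hδ
    _ ≤ ENNReal.ofReal (1 / δ) * diniSeminormPt s g (K * ρ ^ δ) := by
        gcongr
        exact le_iSup (fun y : s =>
          ∫⁻ u in Ioc 0 (K * ρ ^ δ), ENNReal.ofReal (modulusPtOn s g y u / u)) ⟨U x, hU hx⟩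

end

theorem euler_vorticity_dini_bound_general
    (s : Set (EuclideanSpace ℝ (Fin 2))) (hs : IsCompact s)
    (ζ₀ : EuclideanSpace ℝ (Fin 2) → ℝ) (hζ₀ : ContinuousOn ζ₀ s)
    (T K c₁ B ρ : ℝ) (hK : 1 ≤ K) (hc₁ : 0 < c₁) (hρ : 0 < ρ)
    (hB : B = supNormOn s ζ₀)
    (U : ℝ → EuclideanSpace ℝ (Fin 2) → EuclideanSpace ℝ (Fin 2))
    (hUmaps : ∀ t ∈ Icc (0 : ℝ) T, MapsTo (U t) s s)
    (hUsurj : ∀ t ∈ Icc (0 : ℝ) T, SurjOn (U t) s s)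
    (hUhold : ∀ t ∈ Icc (0 : ℝ) T, ∀ x ∈ s, ∀ y ∈ s,
      dist (U t x) (U t y) ≤ K * dist x y ^ Real.exp (-(c₁ * B * t))) :
    ∃ C_T : ℝ, 0 < C_T ∧ ∀ t ∈ Icc (0 : ℝ) T,
      (diniSeminormPt s (ζ₀ ∘ U t) ρ ≤
        ENNReal.ofReal (1 / Real.exp (-(c₁ * B * t))) *
          diniSeminormPt s ζ₀ (K * ρ ^ Real.exp (-(c₁ * B * t)))) ∧
      supNormOn s (ζ₀ ∘ U t) = supNormOn s ζ₀ ∧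
      diniSeminormPt s (ζ₀ ∘ U t) ρ + ENNReal.ofReal (supNormOn s (ζ₀ ∘ U t)) ≤
        ENNReal.ofReal C_T * (diniSeminormPt s ζ₀ ρ + ENNReal.ofReal (supNormOn s ζ₀)) := by
  have hbound := hs.abs_le_supNormOn hζ₀
  have hB₀ : 0 ≤ B := hB ▸ supNormOn_nonneg
  have hK₀ : 0 < K := one_pos.trans_le hK
  set σ := K * max ρ 1
  have hρσ : ρ ≤ σ := (le_max_left ρ 1).trans (le_mul_of_one_le_left (by positivity) hK)
  have hlog : 0 ≤ 2 * Real.log (σ / ρ) :=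
    mul_nonneg zero_le_two (Real.log_nonneg ((one_le_div hρ).2 hρσ))
  refine ⟨Real.exp (c₁ * B * T) * (1 + 2 * Real.log (σ / ρ)) + 1, by positivity, fun t ht => ?_⟩
  set δ := Real.exp (-(c₁ * B * t))
  have hδ₀ : 0 < δ := Real.exp_pos _
  have hδ₁ : δ ≤ 1 := Real.exp_le_one_iff.2 (neg_nonpos.2 (by have := ht.1; positivity))
  have hdini := diniSeminormPt_comp_le hK₀ hδ₀ hbound (hUmaps t ht) (hUhold t ht) ρ
  have hsup := supNormOn_comp_eq (g := ζ₀) (hUmaps t ht) (hUsurj t ht)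
  refine ⟨hdini, hsup, ?_⟩
  rw [hsup]
  refine add_le_ofReal_mul_add_of_le (Real.exp_pos _).le hlog ?_
  calc _ ≤ _ := hdini
    _ ≤ ENNReal.ofReal (Real.exp (c₁ * B * T)) * diniSeminormPt s ζ₀ σ := by
        gcongr
        · rw [one_div, ← Real.exp_neg, neg_neg]
          gcongr
          exact ht.2
        · exact diniSeminormPt_mono
            (mul_le_mul_of_nonneg_left (Real.rpow_le_max_one hρ.le hδ₀.le hδ₁) hK₀.le)
    _ ≤ _ := by gcongr; exact diniSeminormPt_le_add_log hbound hρ hρσ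

/-- The 2-D vorticity transport bound: if the vorticity is transported as
`ζ(t,x) = ζ₀(U(0,t,x))` by surjective streamline maps which are Hölder of exponent
`δ(t) = e^{−c₁ B t}` and constant `K`, and `⟨ζ₀⟩_* < ∞`, then for `t ∈ [0,T]` one has
`⟨ζ(t)⟩_* ≤ (1/δ)·⟨ζ₀⟩_{*,K ρ^δ}`, `‖ζ(t)‖_∞ = ‖ζ₀‖_∞` and
`‖|ζ(t)‖|_* ≤ C_T ‖|ζ₀‖|_*`. -/
theorem euler_vorticity_dini_bound
    (s : Set (EuclideanSpace ℝ (Fin 2))) (hs : IsCompact s) (hne : s.Nonempty)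
    (ζ₀ : EuclideanSpace ℝ (Fin 2) → ℝ) (hζ₀ : ContinuousOn ζ₀ s)
    (T K c₁ B ρ : ℝ) (hT : 0 < T) (hK : 1 ≤ K) (hc₁ : 0 < c₁) (hρ : 0 < ρ)
    (hB : B = supNormOn s ζ₀)
    (hfin : diniSeminormPt s ζ₀ ρ < ⊤)
    (U : ℝ → EuclideanSpace ℝ (Fin 2) → EuclideanSpace ℝ (Fin 2))
    (hUmaps : ∀ t ∈ Icc (0 : ℝ) T, MapsTo (U t) s s)
    (hUsurj : ∀ t ∈ Icc (0 : ℝ) T, SurjOn (U t) s s)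
    (hUhold : ∀ t ∈ Icc (0 : ℝ) T, ∀ x ∈ s, ∀ y ∈ s,
      dist (U t x) (U t y) ≤ K * dist x y ^ Real.exp (-(c₁ * B * t))) :
    ∃ C_T : ℝ, 0 < C_T ∧ ∀ t ∈ Icc (0 : ℝ) T,
      (diniSeminormPt s (ζ₀ ∘ U t) ρ ≤
        ENNReal.ofReal (1 / Real.exp (-(c₁ * B * t))) *
          diniSeminormPt s ζ₀ (K * ρ ^ Real.exp (-(c₁ * B * t)))) ∧
      supNormOn s (ζ₀ ∘ U t) = supNormOn s ζ₀ ∧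
      diniSeminormPt s (ζ₀ ∘ U t) ρ + ENNReal.ofReal (supNormOn s (ζ₀ ∘ U t)) ≤
        ENNReal.ofReal C_T * (diniSeminormPt s ζ₀ ρ + ENNReal.ofReal (supNormOn s ζ₀)) :=
  euler_vorticity_dini_bound_general s hs ζ₀ hζ₀ T K c₁ B ρ hK hc₁ hρ hB U hUmaps hUsurj hUhold
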